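/- arXiv:1801.02709 — 4 statements merged into one kernel-verified Lean document; each statement's English description precedes it below -/
import Mathlib

section
/- Let k ≥ 1 be an integer and d a half-integer with d > k(k+1). Define Ẽ(d,k) = d²/(2k) + dk/2 - ε̃(d,k), where ε̃(d,k) = (1/2)·f·(k - f - 1 + f/k) with d ≡ -f (mod k), 0 ≤ f < k. Then Ẽ(d,k) > Ẽ(d,k+1). Consequently Ẽ(d,k) is strictly decreasing in k in the range d > k(k-1). -/
/-- Let `k ≥ 1` be an integer and `d` a half-integer with `d > k(k+1)`.
With `f` (resp. `f'`) the residue parameter for `k` (resp. `k+1`), the quantity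
`Ẽ(d,k) = d²/(2k) + dk/2 - ε̃(d,k)` satisfies `Ẽ(d,k) > Ẽ(d,k+1)`. -/
theorem stmt1 (k : ℤ) (hk : 1 ≤ k) (d f f' : ℚ)
    (hd2 : ∃ m : ℤ, 2 * d = m) (hf2 : ∃ m : ℤ, 2 * f = m) (hf'2 : ∃ m : ℤ, 2 * f' = m)
    (hf0 : 0 ≤ f) (hfk : f < (k : ℚ)) (hcf : ∃ m : ℤ, d + f = m * k)
    (hf'0 : 0 ≤ f') (hf'k : f' < (k : ℚ) + 1) (hcf' : ∃ m : ℤ, d + f' = m * (k + 1))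
    (hdk : (k : ℚ) * ((k : ℚ) + 1) < d) :
    d^2 / (2 * (k : ℚ)) + d * (k : ℚ) / 2 - (1/2) * f * ((k : ℚ) - f - 1 + f / (k : ℚ))
      > d^2 / (2 * ((k : ℚ) + 1)) + d * ((k : ℚ) + 1) / 2
        - (1/2) * f' * (((k : ℚ) + 1) - f' - 1 + f' / ((k : ℚ) + 1)) := by
  obtain ⟨m, hm⟩ := hcf
  obtain ⟨m', hm'⟩ := hcf'
  push_cast at hm hm'
  have hk1 : (1 : ℚ) ≤ (k : ℚ) := by exact_mod_cast hk
  have hkpos : (0 : ℚ) < (k : ℚ) := by linarith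
  have hk1pos : (0 : ℚ) < (k : ℚ) + 1 := by linarith
  have hk0 : (k : ℚ) ≠ 0 := ne_of_gt hkpos
  have hk10 : (k : ℚ) + 1 ≠ 0 := ne_of_gt hk1pos
  -- m ≥ k + 2
  have hm1 : ((k : ℚ) + 1) * (k : ℚ) < (m : ℚ) * (k : ℚ) := by
    rw [← hm]; nlinarith
  have hm2 : ((k : ℚ) + 1) < (m : ℚ) := lt_of_mul_lt_mul_right hm1 (le_of_lt hkpos)
  have hm3 : ((k : ℚ) + 2) ≤ (m : ℚ) := by
    have h : (k : ℤ) + 1 < m := by exact_mod_cast hm2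
    have h2 : (k : ℤ) + 2 ≤ m := by omega
    exact_mod_cast h2
  -- m' ≤ m - 1
  have hfp : f' = ((m' : ℚ) - (m : ℚ) + 1) * ((k : ℚ) + 1) + ((m : ℚ) - (k : ℚ) - 1 + f) := by
    linear_combination hm' - hm
  have hstep : ((m' : ℚ) - (m : ℚ) + 1) * ((k : ℚ) + 1) < 1 * ((k : ℚ) + 1) := by
    nlinarith
  have hstep2 : ((m' : ℚ) - (m : ℚ) + 1) < 1 := lt_of_mul_lt_mul_right hstep (le_of_lt hk1pos)
  have hme : m' - m + 1 ≤ 0 := by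
    have : (m' : ℤ) - m + 1 < 1 := by exact_mod_cast hstep2
    omega
  set E : ℤ := m - m' - 1 with hEdef
  have hE0 : 0 ≤ E := by omega
  have hE0q : (0 : ℚ) ≤ (E : ℚ) := by exact_mod_cast hE0
  have hEq : (E : ℚ) = (m : ℚ) - (m' : ℚ) - 1 := by
    rw [hEdef]; push_cast; ring
  have dval : d = ((E : ℚ) + 1) * ((k : ℚ) + 1) * (k : ℚ) + (f' - f) * (k : ℚ) - f := by
    rw [hEq]
    linear_combination ((k : ℚ) + 1) * hm - (k : ℚ) * hm'
  have hB : 0 < 2 * (f' - f) * ((k : ℚ) - f) + (E : ℚ) * (d + (f' - f) * (k : ℚ) - f) := by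
    rcases eq_or_lt_of_le hE0q with hE | hE
    · -- E = 0 : here f' - f ≥ 1
      have hE' : (m' : ℚ) - (m : ℚ) + 1 = 0 := by
        have : ((m : ℚ) - (m' : ℚ) - 1) = 0 := by rw [← hEq, ← hE]
        linarith
      have hx1 : 1 ≤ f' - f := by
        rw [hfp, hE']; linarith
      have hz : (E : ℚ) * (d + (f' - f) * (k : ℚ) - f) = 0 := by rw [← hE]; ring
      nlinarith [mul_nonneg (by linarith : (0:ℚ) ≤ f' - f - 1) (by linarith : (0:ℚ) ≤ (k:ℚ) - f)]
    · -- E ≥ 1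
      have hE1 : (1 : ℚ) ≤ (E : ℚ) := by
        have h : (0 : ℤ) < E := by exact_mod_cast hE
        have h2 : (1 : ℤ) ≤ E := h
        exact_mod_cast h2
      have heq : 2 * (f' - f) * ((k : ℚ) - f) + (E : ℚ) * (d + (f' - f) * (k : ℚ) - f)
          = (f' - f + f) * (2 * ((k : ℚ) - f) + 2 * (E : ℚ) * (k : ℚ))
            + ((k : ℚ) + 1) * ((E : ℚ) - 1) * (((E : ℚ) + 2) * (k : ℚ) - 2 * f)
            + 2 * ((k : ℚ) - f) * ((k : ℚ) + 1 - f) := by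
        rw [dval]; ring
      rw [heq]
      have h1 : 0 ≤ (f' - f + f) * (2 * ((k : ℚ) - f) + 2 * (E : ℚ) * (k : ℚ)) := by
        apply mul_nonneg (by linarith) (by nlinarith)
      have h2 : 0 ≤ ((k : ℚ) + 1) * ((E : ℚ) - 1) * (((E : ℚ) + 2) * (k : ℚ) - 2 * f) := by
        apply mul_nonneg (mul_nonneg (by linarith) (by linarith)) (by nlinarith)
      have h3 : 0 < 2 * ((k : ℚ) - f) * ((k : ℚ) + 1 - f) := by
        apply mul_pos (by linarith) (by linarith)
      linarith
  have key : d^2 / (2 * (k : ℚ)) + d * (k : ℚ) / 2 - (1/2) * f * ((k : ℚ) - f - 1 + f / (k : ℚ))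
      - (d^2 / (2 * ((k : ℚ) + 1)) + d * ((k : ℚ) + 1) / 2
        - (1/2) * f' * (((k : ℚ) + 1) - f' - 1 + f' / ((k : ℚ) + 1)))
      = (2 * (f' - f) * ((k : ℚ) - f) + (E : ℚ) * (d + (f' - f) * (k : ℚ) - f)) / 2 := by
    rw [dval]
    field_simp
    ring
  linarith [key, hB]
end

section
/- For integers k ≥ 5 and f with k-1 ≤ f ≤ 2k-5, define δ(c)=1 if c ≡ 2 (mod 3), δ(c)=3 if c=1 or c=3, and δ(c)=0 otherwise; and A(k,f) = (1/3)(k² - kf + f² - 2k + 7f + 12 + δ(2k-f-6)), B(k,f) = (1/3)(k² - kf + f² + 6f + 11 + δ(2k-f-7)). Then A(k,f) and B(k,f) are integers, A(k,f) < B(k,f) ≤ A(k,f+1) for f ≤ 2k-6, and A(k,f) is strictly increasing in f on [k-1, 2k-5]. -/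
/-- `δ(c) = 3` if `c ∈ {1,3}`, `δ(c) = 1` if `c ≡ 2 (mod 3)`, and `δ(c) = 0` otherwise. -/
def hhDelta (c : ℤ) : ℤ := if c = 1 ∨ c = 3 then 3 else if c % 3 = 2 then 1 else 0

/-- `A(k,f) = (1/3)(k² - kf + f² - 2k + 7f + 12 + δ(2k-f-6))`. -/
def hhA (k f : ℤ) : ℚ :=
  ((k^2 - k*f + f^2 - 2*k + 7*f + 12 + hhDelta (2*k - f - 6) : ℤ) : ℚ) / 3

/-- `B(k,f) = (1/3)(k² - kf + f² + 6f + 11 + δ(2k-f-7))`. -/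
def hhB (k f : ℤ) : ℚ :=
  ((k^2 - k*f + f^2 + 6*f + 11 + hhDelta (2*k - f - 7) : ℤ) : ℚ) / 3

lemma deltaBounds (c : ℤ) : 0 ≤ hhDelta c ∧ hhDelta c ≤ 3 := by
  unfold hhDelta; split_ifs <;> omega

lemma deltaZ (c : ℤ) : ((hhDelta c : ℤ) : ZMod 3) = 2*(c:ZMod 3)^2 + (c:ZMod 3) := by
  unfold hhDelta
  split_ifs with h1 h2
  · rcases h1 with h|h <;> subst h <;> decide
  · have hc : ((c : ℤ) : ZMod 3) = ((2:ℤ) : ZMod 3) := by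
      rw [ZMod.intCast_eq_intCast_iff]
      show c % 3 = 2 % 3
      omega
    rw [hc]; decide
  · have h3 : c % 3 = 0 ∨ c % 3 = 1 := by omega
    rcases h3 with h|h
    · have hc : ((c : ℤ) : ZMod 3) = ((0:ℤ) : ZMod 3) := by
        rw [ZMod.intCast_eq_intCast_iff]; show c % 3 = 0 % 3; omega
      rw [hc]; decide
    · have hc : ((c : ℤ) : ZMod 3) = ((1:ℤ) : ZMod 3) := by
        rw [ZMod.intCast_eq_intCast_iff]; show c % 3 = 1 % 3; omega
      rw [hc]; decide

lemma div3A (k f : ℤ) :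
    3 ∣ (k^2 - k*f + f^2 - 2*k + 7*f + 12 + hhDelta (2*k - f - 6)) := by
  have h := (ZMod.intCast_zmod_eq_zero_iff_dvd
    (k^2 - k*f + f^2 - 2*k + 7*f + 12 + hhDelta (2*k - f - 6)) 3).mp ?_
  · exact_mod_cast h
  push_cast
  rw [deltaZ]
  push_cast
  generalize (k : ZMod 3) = x
  generalize (f : ZMod 3) = y
  revert x y; decide

lemma div3B (k f : ℤ) :
    3 ∣ (k^2 - k*f + f^2 + 6*f + 11 + hhDelta (2*k - f - 7)) := by
  have h := (ZMod.intCast_zmod_eq_zero_iff_dvd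
    (k^2 - k*f + f^2 + 6*f + 11 + hhDelta (2*k - f - 7)) 3).mp ?_
  · exact_mod_cast h
  push_cast
  rw [deltaZ]
  push_cast
  generalize (k : ZMod 3) = x
  generalize (f : ZMod 3) = y
  revert x y; decide

lemma ratDivLt {x y : ℤ} (h : x < y) : (x:ℚ)/3 < (y:ℚ)/3 := by
  gcongr
  

lemma ratDivLe {x y : ℤ} (h : x ≤ y) : (x:ℚ)/3 ≤ (y:ℚ)/3 := by
  gcongr

/-- For integers `k ≥ 5` and `k-1 ≤ f ≤ 2k-5`: `A(k,f)` and `B(k,f)` are integers,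
`A(k,f) < B(k,f) ≤ A(k,f+1)` for `f ≤ 2k-6`, and `A(k,·)` is strictly increasing on
`[k-1, 2k-5]`. -/
theorem stmt4 (k : ℤ) (hk : 5 ≤ k) :
    (∀ f : ℤ, k - 1 ≤ f → f ≤ 2*k - 5 →
      (∃ a : ℤ, hhA k f = (a : ℚ)) ∧ (∃ b : ℤ, hhB k f = (b : ℚ))) ∧
    (∀ f : ℤ, k - 1 ≤ f → f ≤ 2*k - 6 →
      hhA k f < hhB k f ∧ hhB k f ≤ hhA k (f + 1)) ∧
    (∀ f g : ℤ, k - 1 ≤ f → f < g → g ≤ 2*k - 5 → hhA k f < hhA k g) := by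
  have step : ∀ f : ℤ, k - 1 ≤ f → f + 1 ≤ 2*k - 5 → hhA k f < hhA k (f + 1) := by
    intro f h1 h2
    unfold hhA
    apply ratDivLt
    have harg : 2*k - (f+1) - 6 = 2*k - f - 7 := by ring
    rw [harg]
    have b1 := deltaBounds (2*k - f - 6)
    have b2 := deltaBounds (2*k - f - 7)
    nlinarith [b1.1, b1.2, b2.1, b2.2]
  refine ⟨?_, ?_, ?_⟩
  · intro f _ _
    constructor
    · obtain ⟨m, hm⟩ := div3A k f
      refine ⟨m, ?_⟩
      unfold hhA
      rw [hm]
      push_cast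
      ring
    · obtain ⟨m, hm⟩ := div3B k f
      refine ⟨m, ?_⟩
      unfold hhB
      rw [hm]
      push_cast
      ring
  · intro f h1 h2
    constructor
    · unfold hhA hhB
      apply ratDivLt
      have b1 := deltaBounds (2*k - f - 6)
      have b2 := deltaBounds (2*k - f - 7)
      nlinarith [b1.1, b1.2, b2.1, b2.2]
    · unfold hhA hhB
      apply ratDivLe
      have harg : 2*k - (f+1) - 6 = 2*k - f - 7 := by ring
      rw [harg]
      nlinarith [deltaBounds (2*k - f - 7)]
  · intro f g h1 hfg h2
    have hfg' : f + 1 ≤ g := hfg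
    exact Int.le_induction (motive := fun g _ => g ≤ 2*k - 5 → hhA k f < hhA k g)
      (fun h2 => step f h1 h2)
      (fun n hn ih h2 => lt_trans (ih (by omega)) (step n (by omega) (by omega)))
      g hfg' h2
end

section
/- Let d ≤ -1 be a half-integer and e a real number with e ≥ d²/2 + 1/3. Then the quantity ρ_Q² - Δ/12 := (4d³ + 9e²)/(4d²) + d/3 is bounded below by (27d⁴ + 64d³ + 36d² + 12)/(48d²), which is strictly positive. -/
/-- Numerical content of Lemma 3.8(ii): for a half-integer `d ≤ -1` and a real
`e ≥ d²/2 + 1/3`, one has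
`(4d³ + 9e²)/(4d²) + d/3 ≥ (27d⁴ + 64d³ + 36d² + 12)/(48d²) > 0`. -/
theorem stmt11 (d e : ℝ) (hd : ∃ m : ℤ, 2 * d = m) (hd1 : d ≤ -1)
    (he : d^2/2 + 1/3 ≤ e) :
    (27*d^4 + 64*d^3 + 36*d^2 + 12)/(48*d^2) ≤ (4*d^3 + 9*e^2)/(4*d^2) + d/3 ∧
    0 < (27*d^4 + 64*d^3 + 36*d^2 + 12)/(48*d^2) := by
  have hdne : d ≠ 0 := by intro h; rw [h] at hd1; norm_num at hd1
  have hd2 : (0:ℝ) < d^2 := by positivity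
  obtain ⟨m, hm⟩ := hd
  -- d = -1 or d ≤ -3/2
  have hcase : d = -1 ∨ d ≤ -3/2 := by
    have hm2 : (m:ℝ) ≤ -2 := by rw [← hm]; linarith
    have hm2' : m ≤ -2 := by exact_mod_cast hm2
    rcases eq_or_lt_of_le hm2' with h | h
    · left; have : (m:ℝ) = -2 := by exact_mod_cast h
      rw [this] at hm; linarith
    · right
      have : m ≤ -3 := by omega
      have : (m:ℝ) ≤ -3 := by exact_mod_cast this
      rw [← hm] at this; linarith
  have hpos : 0 < 27*d^4 + 64*d^3 + 36*d^2 + 12 := by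
    rcases hcase with h | h
    · rw [h]; norm_num
    · nlinarith [sq_nonneg (d + 3/2), sq_nonneg d, mul_pos hd2 hd2]
  constructor
  · have h0 : (0:ℝ) ≤ d^2/2 + 1/3 := by positivity
    have hsq : (d^2/2 + 1/3)^2 ≤ e^2 := by nlinarith
    have key : (4*d^3+9*e^2)/(4*d^2) + d/3 - (27*d^4+64*d^3+36*d^2+12)/(48*d^2)
        = 9*(e^2 - (d^2/2+1/3)^2)/(4*d^2) := by
      field_simp
      ring
    have hnn : 0 ≤ 9*(e^2 - (d^2/2+1/3)^2)/(4*d^2) := by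
      apply div_nonneg _ (by positivity)
      linarith
    linarith
  · apply div_pos hpos (by positivity)
end

section
/- Let d ≤ 0 be a half-integer and e ≥ d²/2 - d + 1/3 a real number. Then (16d³ - 3d² + 36de + 36e² - 6e)/(4d-1)² + d/3 - 1/12 ≥ (108d⁴ + 40d³ + 24d² - 60d + 23)/(12(4d-1)²) > 0. -/
/-! After clearing the denominator `12 (4d-1)²`, the difference of the two sides of the first
inequality is `432 (e - e₀)(e + e₀ + d - 1/6)` with `e₀ = d²/2 - d + 1/3`, i.e. the bound is the
value of the left side at the extremal `e = e₀`, and the second factor is at least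
`d² - d + 1/2 > 0`. The bound's numerator is a quartic without real roots. -/

namespace Lemma38

theorem cleared_sub_bound_eq (d e : ℝ) :
    12 * (16*d^3 - 3*d^2 + 36*d*e + 36*e^2 - 6*e) + (4*d - 1)^3
      - (108*d^4 + 40*d^3 + 24*d^2 - 60*d + 23)
      = 432 * (e - (d^2/2 - d + 1/3)) * (e + (d^2/2 - d + 1/3) + d - 1/6) := by
  ring

theorem bound_numerator_pos (d : ℝ) : 0 < 108*d^4 + 40*d^3 + 24*d^2 - 60*d + 23 := by
  nlinarith [sq_nonneg (d * (3*d + 1)), sq_nonneg (d - 1/2), sq_nonneg d]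

theorem bound_le_of_extremal_le (d e : ℝ) (hd : 4*d - 1 ≠ 0) (he : d^2/2 - d + 1/3 ≤ e) :
    (108*d^4 + 40*d^3 + 24*d^2 - 60*d + 23)/(12*(4*d - 1)^2)
      ≤ (16*d^3 - 3*d^2 + 36*d*e + 36*e^2 - 6*e)/((4*d - 1)^2) + d/3 - 1/12 := by
  have hsq : 0 < (4*d - 1)^2 := by positivity
  have hfactor : 0 < e + (d^2/2 - d + 1/3) + d - 1/6 := by
    nlinarith [sq_nonneg (d - 1/2)]
  have hcleared : 108*d^4 + 40*d^3 + 24*d^2 - 60*d + 23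
      ≤ 12 * (16*d^3 - 3*d^2 + 36*d*e + 36*e^2 - 6*e) + (4*d - 1)^3 := by
    nlinarith [cleared_sub_bound_eq d e, mul_nonneg (sub_nonneg.2 he) hfactor.le]
  calc (108*d^4 + 40*d^3 + 24*d^2 - 60*d + 23)/(12*(4*d - 1)^2)
      ≤ (12 * (16*d^3 - 3*d^2 + 36*d*e + 36*e^2 - 6*e) + (4*d - 1)^3)/(12*(4*d - 1)^2) := by
        gcongr
    _ = (16*d^3 - 3*d^2 + 36*d*e + 36*e^2 - 6*e)/((4*d - 1)^2) + d/3 - 1/12 := by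
        rw [div_add' _ _ _ hsq.ne', div_sub' hsq.ne', div_eq_div_iff (by positivity) hsq.ne']
        ring

end Lemma38

open Lemma38 in
theorem stmt12_general (d e : ℝ) (hd0 : d ≤ 0)
    (he : d^2/2 - d + 1/3 ≤ e) :
    (108*d^4 + 40*d^3 + 24*d^2 - 60*d + 23)/(12*(4*d - 1)^2)
      ≤ (16*d^3 - 3*d^2 + 36*d*e + 36*e^2 - 6*e)/((4*d - 1)^2) + d/3 - 1/12 ∧
    0 < (108*d^4 + 40*d^3 + 24*d^2 - 60*d + 23)/(12*(4*d - 1)^2) := by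
  have hd : 4*d - 1 ≠ 0 := by linarith
  exact ⟨bound_le_of_extremal_le d e hd he, div_pos (bound_numerator_pos d) (by positivity)⟩

/-- Numerical content of Lemma 3.8(i): for a half-integer `d ≤ 0` and a real
`e ≥ d²/2 - d + 1/3`, one has
`(16d³ - 3d² + 36de + 36e² - 6e)/(4d-1)² + d/3 - 1/12
  ≥ (108d⁴ + 40d³ + 24d² - 60d + 23)/(12(4d-1)²) > 0`. -/
theorem stmt12 (d e : ℝ) (hd : ∃ m : ℤ, 2 * d = m) (hd0 : d ≤ 0)
    (he : d^2/2 - d + 1/3 ≤ e) :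
    (108*d^4 + 40*d^3 + 24*d^2 - 60*d + 23)/(12*(4*d - 1)^2)
      ≤ (16*d^3 - 3*d^2 + 36*d*e + 36*e^2 - 6*e)/((4*d - 1)^2) + d/3 - 1/12 ∧
    0 < (108*d^4 + 40*d^3 + 24*d^2 - 60*d + 23)/(12*(4*d - 1)^2) :=
  stmt12_general d e hd0 he
end
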